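/- The assignment (Δ', s) ↦ {i + s : i ∈ Δ'} is a bijection from the set of pairs (Δ', s), where Δ' is an M,N-invariant set fitting (0^{M−1}1, 0^{N−1}1) and s is an integer with s ≥ 1, onto the set of M,N-invariant sets fitting (0^M, 0^N). Moreover, writing Δ = {i + s : i ∈ Δ'}, one has area(Δ) = area(Δ') + s − 1 and pdinv(Δ) = pdinv(Δ'). -/

import Mathlib

/-- The alphabet {0, 1, •}. -/
inductive Symb where
  | zero : Symb
  | one : Symb
  | bullet : Symb
deriving DecidableEq

/-- An `M,N`-invariant set: a subset of ℕ with finite complement,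
closed under adding `M` and adding `N`. -/
def Invariant (M N : ℕ) (Δ : Set ℕ) : Prop :=
  {n : ℕ | n ∉ Δ}.Finite ∧ ∀ i ∈ Δ, i + M ∈ Δ ∧ i + N ∈ Δ

/-- `c` is a north step of `Δ`: `c ∉ Δ` and `c + N ∈ Δ`. -/
def NorthStep (N : ℕ) (Δ : Set ℕ) (c : ℕ) : Prop := c ∉ Δ ∧ c + N ∈ Δ

/-- `c` is an east step of `Δ`: `c ∉ Δ` and `c + M ∈ Δ`. -/
def EastStep (M : ℕ) (Δ : Set ℕ) (c : ℕ) : Prop := c ∉ Δ ∧ c + M ∈ Δ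

/-- `area Δ` is the number of `c ≥ M + N` with `c ∉ Δ`. -/
noncomputable def area (M N : ℕ) (Δ : Set ℕ) : ℕ := {c : ℕ | M + N ≤ c ∧ c ∉ Δ}.ncard

/-- `pdinv Δ` is the number of pairs `(c, d)` with `c < d`, `M ≤ d < c + M`,
`c` a north step of `Δ`, and `d ∉ Δ`. -/
noncomputable def pdinv (M N : ℕ) (Δ : Set ℕ) : ℕ :=
  {p : ℕ × ℕ | p.1 < p.2 ∧ M ≤ p.2 ∧ p.2 < p.1 + M ∧ NorthStep N Δ p.1 ∧ p.2 ∉ Δ}.ncard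

/-- `Δ` fits the pair of words `(v, w)`, where `v` has length `M` and `w` has length `N`. -/
def Fits (M N : ℕ) (Δ : Set ℕ) (v w : List Symb) : Prop :=
  v.length = M ∧ w.length = N ∧
  (∀ (i : ℕ) (hi : i < v.length),
    (v.get ⟨i, hi⟩ = Symb.bullet ↔ i ∈ Δ) ∧
    (v.get ⟨i, hi⟩ = Symb.one ↔ NorthStep N Δ i) ∧
    (v.get ⟨i, hi⟩ = Symb.zero ↔ (i ∉ Δ ∧ i + N ∉ Δ))) ∧
  (∀ (i : ℕ) (hi : i < w.length),
    (w.get ⟨i, hi⟩ = Symb.bullet ↔ i ∈ Δ) ∧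
    (w.get ⟨i, hi⟩ = Symb.one ↔ EastStep M Δ i) ∧
    (w.get ⟨i, hi⟩ = Symb.zero ↔ (i ∉ Δ ∧ i + M ∉ Δ)))

/-- Decrement: `dec Δ = {i : ℕ | i + 1 ∈ Δ}`. -/
def dec (Δ : Set ℕ) : Set ℕ := {i : ℕ | i + 1 ∈ Δ}

/-! Both fitting conditions only see the integers below `M + N`: fitting `(0^M, 0^N)` says
that `Δ` avoids `[0, M + N)`, and fitting `(0^{M−1}1, 0^{N−1}1)` says that `min Δ = M + N − 1`.
Shifting by `s` moves the minimum to `M + N − 1 + s`, so the inverse map reads off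
`s = min Δ − (M + N − 1)`. The shift creates the `s − 1` new gaps `M + N, …, M + N + s − 2` and
translates every `pdinv` pair by `(s, s)`; no pair is lost, because a north step `c` satisfies
`c + N ≥ min Δ`. -/

lemma letter_conditions_iff_of_ne_bullet {x : Symb} (hx : x ≠ Symb.bullet) {p q : Prop} :
    ((x = Symb.bullet ↔ p) ∧ (x = Symb.one ↔ ¬p ∧ q) ∧ (x = Symb.zero ↔ ¬p ∧ ¬q)) ↔
      ¬p ∧ (x = Symb.one ↔ q) := by
  cases x <;> simp at hx ⊢ <;> tauto

lemma fits_iff_of_bullet_notMem {M N : ℕ} {Δ : Set ℕ} {v w : List Symb}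
    (hv : Symb.bullet ∉ v) (hw : Symb.bullet ∉ w) :
    Fits M N Δ v w ↔ v.length = M ∧ w.length = N ∧
      (∀ (i : ℕ) (hi : i < v.length), i ∉ Δ ∧ (v[i] = Symb.one ↔ i + N ∈ Δ)) ∧
      (∀ (i : ℕ) (hi : i < w.length), i ∉ Δ ∧ (w[i] = Symb.one ↔ i + M ∈ Δ)) := by
  have letter {u : List Symb} (hu : Symb.bullet ∉ u) (i : ℕ) (hi : i < u.length) :
      u[i] ≠ Symb.bullet := fun h => hu (h ▸ List.getElem_mem hi)
  simp only [Fits, List.get_eq_getElem, NorthStep, EastStep,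
    letter_conditions_iff_of_ne_bullet (letter hv _ _),
    letter_conditions_iff_of_ne_bullet (letter hw _ _)]

lemma fits_replicate_zero_iff {M N : ℕ} {Δ : Set ℕ} :
    Fits M N Δ (List.replicate M Symb.zero) (List.replicate N Symb.zero) ↔
      ∀ c ∈ Δ, M + N ≤ c := by
  rw [fits_iff_of_bullet_notMem (by simp) (by simp)]
  simp only [List.length_replicate, List.getElem_replicate, reduceCtorEq, false_iff, true_and]
  constructor
  · rintro ⟨hv, hw⟩ c hc
    by_contra! hlt
    rcases lt_or_ge c M with h | h
    · exact (hv c h).1 hc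
    · exact (hw (c - M) (by omega)).2 (by rwa [Nat.sub_add_cancel h])
  · intro h
    have notMem : ∀ c < M + N, c ∉ Δ := fun c hc hcΔ => absurd (h c hcΔ) (by omega)
    exact ⟨fun i hi => ⟨notMem i (by omega), notMem _ (by omega)⟩,
      fun i hi => ⟨notMem i (by omega), notMem _ (by omega)⟩⟩

lemma getElem_replicate_append_singleton {α : Type*} {a b : α} {k i : ℕ}
    (hi : i < (List.replicate k a ++ [b]).length) :
    (List.replicate k a ++ [b])[i] = if i = k then b else a := by
  have : i < k + 1 := by simpa using hi
  rw [List.getElem_append]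
  simp only [List.length_replicate, List.getElem_replicate, List.getElem_singleton]
  split_ifs <;> first | rfl | omega

lemma fits_replicate_zero_append_one_iff {M N : ℕ} {Δ : Set ℕ} (hM : 0 < M) (hN : 0 < N) :
    Fits M N Δ (List.replicate (M - 1) Symb.zero ++ [Symb.one])
      (List.replicate (N - 1) Symb.zero ++ [Symb.one]) ↔ IsLeast Δ (M + N - 1) := by
  rw [fits_iff_of_bullet_notMem (by simp) (by simp)]
  simp only [List.length_append, List.length_replicate, List.length_singleton,
    getElem_replicate_append_singleton, ite_eq_left_iff, reduceCtorEq, imp_false, not_not,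
    Nat.sub_add_cancel hM, Nat.sub_add_cancel hN, true_and, IsLeast, mem_lowerBounds]
  constructor
  · rintro ⟨hv, hw⟩
    have hmem : M + N - 1 ∈ Δ := by
      simpa [show M - 1 + N = M + N - 1 by omega] using (hv (M - 1) (by omega)).2
    refine ⟨hmem, fun c hc => ?_⟩
    by_contra! hlt
    rcases lt_or_ge c M with h | h
    · exact (hv c h).1 hc
    · have := (hw (c - M) (by omega)).2
      simp only [Nat.sub_add_cancel h] at this
      exact absurd (this.mpr hc) (by omega)
  · rintro ⟨hmem, hle⟩
    have notMem : ∀ c < M + N - 1, c ∉ Δ := fun c hc h => absurd (hle c h) (by omega)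
    refine ⟨fun i hi => ⟨notMem i (by omega), ?_⟩, fun i hi => ⟨notMem i (by omega), ?_⟩⟩
    · refine ⟨fun h => ?_, fun h => ?_⟩
      · rwa [h, show M - 1 + N = M + N - 1 by omega]
      · have := hle _ h; omega
    · refine ⟨fun h => ?_, fun h => ?_⟩
      · rwa [h, show N - 1 + M = M + N - 1 by omega]
      · have := hle _ h; omega

namespace Invariant

variable {M N : ℕ} {Δ : Set ℕ}

lemma nonempty (h : Invariant M N Δ) : Δ.Nonempty := by
  simpa only [Set.compl_ofPred, not_not, Set.ofPred_mem_eq] using h.1.infinite_compl.nonempty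

lemma image_add (h : Invariant M N Δ) (s : ℕ) : Invariant M N ((· + s) '' Δ) := by
  refine ⟨((Set.finite_Iio s).union (h.1.image (· + s))).subset fun x hx => ?_, ?_⟩
  · by_cases hxs : x < s
    · exact Or.inl hxs
    · refine Or.inr ⟨x - s, fun hΔ => hx ⟨x - s, hΔ, ?_⟩, ?_⟩ <;> simp only <;> omega
  · rintro _ ⟨i, hi, rfl⟩
    exact ⟨⟨i + M, (h.2 i hi).1, by ring⟩, ⟨i + N, (h.2 i hi).2, by ring⟩⟩

lemma preimage_add (h : Invariant M N Δ) (s : ℕ) : Invariant M N ((· + s) ⁻¹' Δ) := by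
  refine ⟨h.1.preimage (add_left_injective s).injOn, fun i hi => ?_⟩
  simp only [Set.mem_preimage, add_right_comm i _ s]
  exact h.2 _ hi

end Invariant

lemma bijOn_image_add {M N n : ℕ} :
    Set.BijOn (fun p : Set ℕ × ℕ => (· + p.2) '' p.1)
      {p : Set ℕ × ℕ | Invariant M N p.1 ∧ IsLeast p.1 n ∧ 1 ≤ p.2}
      {Δ : Set ℕ | Invariant M N Δ ∧ ∀ c ∈ Δ, n < c} := by
  refine ⟨?_, ?_, ?_⟩
  · rintro ⟨Δ, s⟩ ⟨hΔ, hleast, hs⟩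
    refine ⟨hΔ.image_add s, ?_⟩
    rintro _ ⟨i, hi, rfl⟩
    have := hleast.2 hi
    dsimp only
    omega
  · rintro ⟨Δ₁, s₁⟩ ⟨-, h₁, -⟩ ⟨Δ₂, s₂⟩ ⟨-, h₂, -⟩ heq
    have hleast (Δ : Set ℕ) (s : ℕ) (h : IsLeast Δ n) : IsLeast ((· + s) '' Δ) (n + s) :=
      (add_left_mono (a := s)).map_isLeast h
    dsimp only at heq
    have hs : s₁ = s₂ :=
      Nat.add_left_cancel ((hleast Δ₁ s₁ h₁).unique (heq ▸ hleast Δ₂ s₂ h₂))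
    subst hs
    exact Prod.ext ((Set.image_injective.mpr (add_left_injective s₁)) heq) rfl
  · rintro Δ ⟨hΔ, hgt⟩
    have hleast : IsLeast Δ (sInf Δ) := ⟨Nat.sInf_mem hΔ.nonempty, fun x hx => Nat.sInf_le hx⟩
    have hn := hgt _ hleast.1
    set s := sInf Δ - n
    refine ⟨((· + s) ⁻¹' Δ, s), ⟨hΔ.preimage_add s, ⟨?_, fun x hx => ?_⟩, by omega⟩, ?_⟩
    · simpa [s, show n + (sInf Δ - n) = sInf Δ by omega] using hleast.1
    · have := hleast.2 hx
      simp only [Set.mem_preimage] at hx this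
      omega
    · refine Set.image_preimage_eq_of_subset fun x hx => ⟨x - s, ?_⟩
      have := hleast.2 hx
      simp only
      omega

lemma ncard_notMem_image_add {Δ : Set ℕ} {n s : ℕ} (hfin : {c | c ∉ Δ}.Finite)
    (hΔ : IsLeast Δ n) (hs : 1 ≤ s) :
    {c | n < c ∧ c ∉ (· + s) '' Δ}.ncard = {c | n < c ∧ c ∉ Δ}.ncard + s - 1 := by
  have hsplit : {c | n < c ∧ c ∉ (· + s) '' Δ} =
      (· + s) '' {c | n < c ∧ c ∉ Δ} ∪ Set.Ioo n (n + s) := by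
    ext x
    simp only [Set.mem_ofPred_eq, Set.mem_union, Set.mem_image, Set.mem_Ioo]
    constructor
    · rintro ⟨hx, hxΔ⟩
      by_cases hxs : x < n + s
      · exact Or.inr ⟨hx, hxs⟩
      · have hx' : x = x - s + s := by omega
        refine Or.inl ⟨x - s, ⟨?_, fun h => hxΔ ⟨x - s, h, hx'.symm⟩⟩, hx'.symm⟩
        by_contra! hle
        exact hxΔ ⟨n, hΔ.1, by omega⟩
    · rintro (⟨i, ⟨hi, hiΔ⟩, rfl⟩ | ⟨hx, hxs⟩)
      · exact ⟨by omega, fun h => hiΔ ((add_left_injective s).mem_set_image.mp h)⟩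
      · refine ⟨hx, ?_⟩
        rintro ⟨i, hi, rfl⟩
        have := hΔ.2 hi
        omega
  have hdisj : Disjoint ((· + s) '' {c | n < c ∧ c ∉ Δ}) (Set.Ioo n (n + s)) := by
    refine Set.disjoint_left.mpr ?_
    rintro _ ⟨i, ⟨hi, -⟩, rfl⟩ ⟨-, h⟩
    beta_reduce at h
    omega
  rw [hsplit,
    Set.ncard_union_eq hdisj ((hfin.subset fun c hc => hc.2).image _) (Set.finite_Ioo _ _),
    Set.ncard_image_of_injective _ (add_left_injective s), Set.ncard_Ioo_nat]
  omega

lemma area_image_add {M N s : ℕ} {Δ : Set ℕ} (hMN : 0 < M + N) (hfin : {c | c ∉ Δ}.Finite)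
    (hΔ : IsLeast Δ (M + N - 1)) (hs : 1 ≤ s) :
    area M N ((· + s) '' Δ) = area M N Δ + s - 1 := by
  have hlt (c : ℕ) : M + N ≤ c ↔ M + N - 1 < c := by omega
  simpa only [area, hlt] using ncard_notMem_image_add hfin hΔ hs

lemma pdinv_image_add {M N : ℕ} {Δ : Set ℕ} (hΔ : M + N - 1 ∈ lowerBounds Δ) (s : ℕ) :
    pdinv M N ((· + s) '' Δ) = pdinv M N Δ := by
  have hinj : Function.Injective (Prod.map (· + s) (· + s) : ℕ × ℕ → ℕ × ℕ) :=
    (add_left_injective s).prodMap (add_left_injective s)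
  rw [pdinv, pdinv, ← Set.ncard_preimage_of_injective_subset_range hinj]
  · congr 1
    ext ⟨c, d⟩
    simp only [Set.mem_preimage, Set.mem_ofPred_eq, Prod.map, NorthStep, add_right_comm c s N,
      (add_left_injective s).mem_set_image]
    constructor
    · rintro ⟨hcd, -, hdc, hc, hd⟩
      have : M + N - 1 ≤ c + N := hΔ hc.2
      exact ⟨by omega, by omega, by omega, hc, hd⟩
    · rintro ⟨hcd, hMd, hdc, hc, hd⟩
      exact ⟨by omega, by omega, by omega, hc, hd⟩
  · rintro ⟨c, d⟩ ⟨hcd, -, hdc, ⟨-, ⟨i, hi, hic⟩⟩, -⟩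
    have : M + N - 1 ≤ i := hΔ hi
    dsimp only at hcd hdc hic
    exact ⟨(c - s, d - s), by simp only [Prod.map, Prod.mk.injEq]; omega⟩

/-- The assignment `(Δ', s) ↦ {i + s : i ∈ Δ'}` is a bijection from the
set of pairs `(Δ', s)` with `Δ'` an `M,N`-invariant set fitting `(0^{M−1}1, 0^{N−1}1)` and
`s ≥ 1`, onto the set of `M,N`-invariant sets fitting `(0^M, 0^N)`. Moreover, writing
`Δ = {i + s : i ∈ Δ'}`, one has `area Δ = area Δ' + s − 1` and `pdinv Δ = pdinv Δ'`. -/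
theorem increment_bijection (M N : ℕ) (hM : 0 < M) (hN : 0 < N) :
    Set.BijOn (fun p : Set ℕ × ℕ => (fun i => i + p.2) '' p.1)
      {p : Set ℕ × ℕ | Invariant M N p.1 ∧
        Fits M N p.1 (List.replicate (M - 1) Symb.zero ++ [Symb.one])
          (List.replicate (N - 1) Symb.zero ++ [Symb.one]) ∧ 1 ≤ p.2}
      {Δ : Set ℕ | Invariant M N Δ ∧
        Fits M N Δ (List.replicate M Symb.zero) (List.replicate N Symb.zero)} ∧
    ∀ (Δ' : Set ℕ) (s : ℕ), Invariant M N Δ' →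
      Fits M N Δ' (List.replicate (M - 1) Symb.zero ++ [Symb.one])
        (List.replicate (N - 1) Symb.zero ++ [Symb.one]) → 1 ≤ s →
      area M N ((fun i => i + s) '' Δ') = area M N Δ' + s - 1 ∧
      pdinv M N ((fun i => i + s) '' Δ') = pdinv M N Δ' := by
  simp only [fits_replicate_zero_append_one_iff hM hN, fits_replicate_zero_iff]
  refine ⟨?_, fun Δ' s hΔ' hleast hs =>
    ⟨area_image_add (by omega) hΔ'.1 hleast hs, pdinv_image_add hleast.2 s⟩⟩
  have hlt (c : ℕ) : M + N ≤ c ↔ M + N - 1 < c := by omega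
  simpa only [hlt] using bijOn_image_add (M := M) (N := N) (n := M + N - 1)
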